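/- The function φ̂ is concave on (0, ∞). Moreover, if there exist indices i, j with w_i > 0, w_j > 0, and r_i ≠ r_j, then φ̂ is strictly concave on (0, ∞). -/

import Mathlib

/-!
Writing `L(t) = log ((1/N) ∑ᵢ wᵢ exp (-rᵢ t))`, we have `φ̂(α) = -α (L(1/α) + δ)`.
The log-sum-exp function `L` is convex by Hölder's inequality, and strictly convex as soon as two
positive weights carry distinct rewards, since Hölder's inequality is strict for non-proportional
vectors. The perspective `α ↦ α g(1/α)` of a (strictly) convex `g` is (strictly) convex on
`(0, ∞)`, because `1/(aα + bβ)` is the convex combination of `1/α` and `1/β` with weights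
`aα/(aα + bβ)` and `bβ/(aα + bβ)`.
-/
open Finset

/-- Weighted DROPE objective `φ̂(α) = -α log((1/N) ∑ᵢ wᵢ exp(-rᵢ/α)) - αδ`. -/
noncomputable def phiHat (N : ℕ) (r w : Fin N → ℝ) (δ : ℝ) (α : ℝ) : ℝ :=
  -α * Real.log ((1 / (N : ℝ)) * ∑ i, w i * Real.exp (-r i / α)) - α * δ

/-- Weight-mean `S_w = (1/N) ∑ᵢ wᵢ`. -/
noncomputable def Sw (N : ℕ) (w : Fin N → ℝ) : ℝ := (1 / (N : ℝ)) * ∑ i, w i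

/-- Minimum reward `m = minᵢ rᵢ`. -/
noncomputable def mMin (N : ℕ) (r : Fin N → ℝ) : ℝ := ⨅ i, r i

/-- Min-reward weight-mean `S_w^m = (1/N) ∑_{i : rᵢ = m} wᵢ`. -/
noncomputable def Swm (N : ℕ) (r w : Fin N → ℝ) : ℝ :=
  (1 / (N : ℝ)) * ∑ i ∈ Finset.univ.filter (fun i => r i = mMin N r), w i

open Real Set

namespace Real

variable {ι : Type*} {t : Finset ι} {f g : ι → ℝ} {p q x y U V : ℝ}

lemma mul_log_add_mul_log_eq_log_rpow_mul_rpow {a b X Y : ℝ} (hX : 0 < X) (hY : 0 < Y) :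
    a * log X + b * log Y = log (X ^ a * Y ^ b) := by
  rw [log_mul (rpow_pos_of_pos hX a).ne' (rpow_pos_of_pos hY b).ne', log_rpow hX, log_rpow hY]

lemma rpow_mul_rpow_eq_mul_div_rpow_mul_div_rpow (hx : 0 ≤ x) (hy : 0 ≤ y) (hU : 0 < U)
    (hV : 0 < V) : x ^ p * y ^ q = U ^ p * V ^ q * ((x / U) ^ p * (y / V) ^ q) := by
  rw [div_rpow hx hU.le, div_rpow hy hV.le]
  field_simp

lemma rpow_mul_rpow_le_mul_add_div (hx : 0 ≤ x) (hy : 0 ≤ y) (hU : 0 < U) (hV : 0 < V)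
    (hp : 0 ≤ p) (hq : 0 ≤ q) (hpq : p + q = 1) :
    x ^ p * y ^ q ≤ U ^ p * V ^ q * (p * (x / U) + q * (y / V)) := by
  rw [rpow_mul_rpow_eq_mul_div_rpow_mul_div_rpow hx hy hU hV]
  gcongr
  exact geom_mean_le_arith_mean2_weighted hp hq (div_nonneg hx hU.le) (div_nonneg hy hV.le) hpq

lemma rpow_mul_rpow_lt_mul_add_div (hx : 0 ≤ x) (hy : 0 ≤ y) (hU : 0 < U) (hV : 0 < V)
    (hp : 0 < p) (hq : 0 < q) (hpq : p + q = 1) (hxy : x / U ≠ y / V) :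
    x ^ p * y ^ q < U ^ p * V ^ q * (p * (x / U) + q * (y / V)) := by
  rw [rpow_mul_rpow_eq_mul_div_rpow_mul_div_rpow hx hy hU hV]
  gcongr
  exact (geom_mean_lt_arith_mean2_weighted_iff_of_pos hp hq (div_nonneg hx hU.le)
    (div_nonneg hy hV.le) hpq).2 hxy

lemma sum_mul_add_div_sum_eq (hpq : p + q = 1) (hU : ∑ i ∈ t, f i ≠ 0)
    (hV : ∑ i ∈ t, g i ≠ 0) (C : ℝ) :
    ∑ i ∈ t, C * (p * (f i / ∑ j ∈ t, f j) + q * (g i / ∑ j ∈ t, g j)) = C := by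
  rw [← mul_sum, sum_add_distrib, ← mul_sum, ← mul_sum, ← sum_div, ← sum_div, div_self hU,
    div_self hV, mul_one, mul_one, hpq, mul_one]

-- Hölder's inequality for the exponents `1 / p` and `1 / q`.
theorem sum_rpow_mul_rpow_le (hf : ∀ i ∈ t, 0 ≤ f i) (hg : ∀ i ∈ t, 0 ≤ g i) (hp : 0 ≤ p)
    (hq : 0 ≤ q) (hpq : p + q = 1) (hU : 0 < ∑ i ∈ t, f i) (hV : 0 < ∑ i ∈ t, g i) :
    ∑ i ∈ t, f i ^ p * g i ^ q ≤ (∑ i ∈ t, f i) ^ p * (∑ i ∈ t, g i) ^ q := by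
  calc _ ≤ ∑ i ∈ t, (∑ j ∈ t, f j) ^ p * (∑ j ∈ t, g j) ^ q *
          (p * (f i / ∑ j ∈ t, f j) + q * (g i / ∑ j ∈ t, g j)) :=
        sum_le_sum fun i hi => rpow_mul_rpow_le_mul_add_div (hf i hi) (hg i hi) hU hV hp hq hpq
    _ = _ := sum_mul_add_div_sum_eq hpq hU.ne' hV.ne' _

lemma sum_pos_of_mul_ne_mul (hf : ∀ i ∈ t, 0 ≤ f i) {i j : ι} (hi : i ∈ t) (hj : j ∈ t)
    (hij : f i * g j ≠ f j * g i) : 0 < ∑ k ∈ t, f k := by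
  refine (sum_nonneg hf).lt_of_ne fun h => hij ?_
  rw [eq_comm, sum_eq_zero_iff_of_nonneg hf] at h
  simp [h i hi, h j hj]

theorem sum_rpow_mul_rpow_lt (hf : ∀ i ∈ t, 0 ≤ f i) (hg : ∀ i ∈ t, 0 ≤ g i) (hp : 0 < p)
    (hq : 0 < q) (hpq : p + q = 1) {i j : ι} (hi : i ∈ t) (hj : j ∈ t)
    (hij : f i * g j ≠ f j * g i) :
    ∑ i ∈ t, f i ^ p * g i ^ q < (∑ i ∈ t, f i) ^ p * (∑ i ∈ t, g i) ^ q := by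
  have hU : 0 < ∑ k ∈ t, f k := sum_pos_of_mul_ne_mul hf hi hj hij
  have hV : 0 < ∑ k ∈ t, g k :=
    sum_pos_of_mul_ne_mul (g := f) hg hj hi (by rwa [mul_comm (g j), mul_comm (g i)])
  obtain ⟨k, hk, hfgk⟩ : ∃ k ∈ t, f k / ∑ l ∈ t, f l ≠ g k / ∑ l ∈ t, g l := by
    by_contra! h
    have hi' := h i hi
    have hj' := h j hj
    rw [div_eq_div_iff hU.ne' hV.ne'] at hi' hj'
    exact hij (mul_right_cancel₀ hV.ne' (by linear_combination g j * hi' - g i * hj'))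
  calc _ < ∑ i ∈ t, (∑ j ∈ t, f j) ^ p * (∑ j ∈ t, g j) ^ q *
          (p * (f i / ∑ j ∈ t, f j) + q * (g i / ∑ j ∈ t, g j)) :=
        sum_lt_sum
          (fun i hi => rpow_mul_rpow_le_mul_add_div (hf i hi) (hg i hi) hU hV hp.le hq.le hpq)
          ⟨k, hk, rpow_mul_rpow_lt_mul_add_div (hf k hk) (hg k hk) hU hV hp hq hpq hfgk⟩
    _ = _ := sum_mul_add_div_sum_eq hpq hU.ne' hV.ne' _

end Real

section LogSumExp

variable {ι : Type*} [Fintype ι] {c : ι → ℝ} (s : ι → ℝ)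

lemma mul_exp_mul_add_mul_eq_rpow_mul_rpow {c s a b t u : ℝ} (hc : 0 ≤ c) (hab : a + b = 1) :
    c * exp (s * (a * t + b * u)) = (c * exp (s * t)) ^ a * (c * exp (s * u)) ^ b := by
  rw [mul_rpow hc (exp_pos _).le, mul_rpow hc (exp_pos _).le, ← exp_mul, ← exp_mul,
    mul_mul_mul_comm, ← rpow_add' hc (by rw [hab]; exact one_ne_zero), hab, rpow_one,
    ← exp_add]
  ring_nf

lemma sum_mul_exp_mul_pos (hc : ∀ i, 0 ≤ c i) (h : ∃ i, 0 < c i) (t : ℝ) :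
    0 < ∑ i, c i * exp (s i * t) :=
  let ⟨i, hi⟩ := h
  sum_pos' (fun j _ => mul_nonneg (hc j) (exp_pos _).le) ⟨i, mem_univ i, mul_pos hi (exp_pos _)⟩

lemma sum_mul_exp_mul_add_mul (hc : ∀ i, 0 ≤ c i) {a b : ℝ} (hab : a + b = 1) (t u : ℝ) :
    ∑ i, c i * exp (s i * (a * t + b * u)) =
      ∑ i, (c i * exp (s i * t)) ^ a * (c i * exp (s i * u)) ^ b :=
  sum_congr rfl fun i _ => mul_exp_mul_add_mul_eq_rpow_mul_rpow (hc i) hab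

theorem convexOn_log_sum_mul_exp_mul (hc : ∀ i, 0 ≤ c i) :
    ConvexOn ℝ univ fun t => log (∑ i, c i * exp (s i * t)) := by
  by_cases h : ∃ i, 0 < c i
  swap
  · obtain rfl : c = 0 := funext fun i => (not_lt.1 (not_exists.1 h i)).antisymm (hc i)
    simpa using convexOn_const 0 convex_univ
  refine convexOn_iff_forall_pos.2 ⟨convex_univ, fun t _ u _ a b ha hb hab => ?_⟩
  have hS := sum_mul_exp_mul_pos s hc h
  have hmix := sum_mul_exp_mul_add_mul s hc hab t u
  simp only [smul_eq_mul]
  rw [mul_log_add_mul_log_eq_log_rpow_mul_rpow (hS t) (hS u), hmix]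
  exact log_le_log (hmix ▸ hS _) <| sum_rpow_mul_rpow_le
    (fun i _ => mul_nonneg (hc i) (exp_pos _).le) (fun i _ => mul_nonneg (hc i) (exp_pos _).le)
    ha.le hb.le hab (hS t) (hS u)

theorem strictConvexOn_log_sum_mul_exp_mul (hc : ∀ i, 0 ≤ c i) {i j : ι} (hi : 0 < c i)
    (hj : 0 < c j) (hs : s i ≠ s j) :
    StrictConvexOn ℝ univ fun t => log (∑ i, c i * exp (s i * t)) := by
  refine ⟨convex_univ, fun t _ u _ htu a b ha hb hab => ?_⟩
  have hS := sum_mul_exp_mul_pos s hc ⟨i, hi⟩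
  have hmix := sum_mul_exp_mul_add_mul s hc hab t u
  have hij : c i * exp (s i * t) * (c j * exp (s j * u)) ≠
      c j * exp (s j * t) * (c i * exp (s i * u)) := by
    intro h
    have hexp : exp (s i * t + s j * u) = exp (s j * t + s i * u) := by
      rw [exp_add, exp_add]
      refine mul_left_cancel₀ (mul_pos hi hj).ne' ?_
      linear_combination h
    exact mul_ne_zero (sub_ne_zero.2 hs) (sub_ne_zero.2 htu)
      (by linear_combination exp_injective hexp)
  simp only [smul_eq_mul]
  rw [mul_log_add_mul_log_eq_log_rpow_mul_rpow (hS t) (hS u), hmix]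
  exact log_lt_log (hmix ▸ hS _) <| sum_rpow_mul_rpow_lt
    (fun i _ => mul_nonneg (hc i) (exp_pos _).le) (fun i _ => mul_nonneg (hc i) (exp_pos _).le)
    ha hb hab (mem_univ i) (mem_univ j) hij

end LogSumExp

section Perspective

variable {g : ℝ → ℝ} {x y a b : ℝ}

lemma div_smul_inv_add_div_smul_inv (hx : x ≠ 0) (hy : y ≠ 0) (hz : a * x + b * y ≠ 0)
    (hab : a + b = 1) :
    (a * x / (a * x + b * y)) • x⁻¹ + (b * y / (a * x + b * y)) • y⁻¹ = (a * x + b * y)⁻¹ := by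
  simp only [smul_eq_mul]
  field_simp
  exact hab

theorem ConvexOn.mul_comp_inv (hg : ConvexOn ℝ (Ioi 0) g) :
    ConvexOn ℝ (Ioi 0) fun x => x * g x⁻¹ := by
  refine convexOn_iff_forall_pos.2 ⟨convex_Ioi 0, fun x hx y hy a b ha hb hab => ?_⟩
  rw [Set.mem_Ioi] at hx hy
  have hz : 0 < a * x + b * y := by positivity
  have key := hg.2 (inv_pos.2 hx) (inv_pos.2 hy) (div_pos (mul_pos ha hx) hz).le
    (div_pos (mul_pos hb hy) hz).le (by rw [← add_div, div_self hz.ne'])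
  rw [div_smul_inv_add_div_smul_inv hx.ne' hy.ne' hz.ne' hab, smul_eq_mul, smul_eq_mul] at key
  simp only [smul_eq_mul]
  calc (a * x + b * y) * g (a * x + b * y)⁻¹
      ≤ (a * x + b * y) *
          (a * x / (a * x + b * y) * g x⁻¹ + b * y / (a * x + b * y) * g y⁻¹) := by
        gcongr
    _ = a * (x * g x⁻¹) + b * (y * g y⁻¹) := by field_simp

theorem StrictConvexOn.mul_comp_inv (hg : StrictConvexOn ℝ (Ioi 0) g) :
    StrictConvexOn ℝ (Ioi 0) fun x => x * g x⁻¹ := by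
  refine ⟨convex_Ioi 0, fun x hx y hy hxy a b ha hb hab => ?_⟩
  rw [Set.mem_Ioi] at hx hy
  have hz : 0 < a * x + b * y := by positivity
  have key := hg.2 (inv_pos.2 hx) (inv_pos.2 hy) (inv_injective.ne hxy)
    (div_pos (mul_pos ha hx) hz) (div_pos (mul_pos hb hy) hz)
    (by rw [← add_div, div_self hz.ne'])
  rw [div_smul_inv_add_div_smul_inv hx.ne' hy.ne' hz.ne' hab, smul_eq_mul, smul_eq_mul] at key
  simp only [smul_eq_mul]
  calc (a * x + b * y) * g (a * x + b * y)⁻¹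
      < (a * x + b * y) *
          (a * x / (a * x + b * y) * g x⁻¹ + b * y / (a * x + b * y) * g y⁻¹) := by
        gcongr
    _ = a * (x * g x⁻¹) + b * (y * g y⁻¹) := by field_simp

end Perspective

theorem phiHat_concaveOn_and_strictConcaveOn_general
    (N : ℕ) (r w : Fin N → ℝ) (hw : ∀ i, 0 ≤ w i) (δ : ℝ) :
    ConcaveOn ℝ (Set.Ioi (0 : ℝ)) (phiHat N r w δ) ∧
      ((∃ i j : Fin N, 0 < w i ∧ 0 < w j ∧ r i ≠ r j) →
        StrictConcaveOn ℝ (Set.Ioi (0 : ℝ)) (phiHat N r w δ)) := by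
  have hφ : phiHat N r w δ =
      -fun α => α * (log (∑ i, 1 / (N : ℝ) * w i * exp (-r i * α⁻¹)) + δ) := by
    ext α
    simp only [phiHat, Pi.neg_apply, mul_sum, mul_assoc, div_eq_mul_inv]
    ring
  have hc : ∀ i, 0 ≤ 1 / (N : ℝ) * w i := fun i => mul_nonneg (by positivity) (hw i)
  refine ⟨?_, fun ⟨i, j, hi, hj, hr⟩ => ?_⟩
  · have hL := convexOn_log_sum_mul_exp_mul (fun i => -r i) hc
    rw [hφ, neg_concaveOn_iff]
    exact (hL.subset (subset_univ _) (convex_Ioi 0) |>.add_const δ).mul_comp_inv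
  · have hN : (0 : ℝ) < 1 / N := by have := i.pos; positivity
    have hL := strictConvexOn_log_sum_mul_exp_mul (fun i => -r i) hc (mul_pos hN hi) (mul_pos hN hj)
      (neg_injective.ne hr)
    rw [hφ, neg_strictConcaveOn_iff]
    exact (hL.subset (subset_univ _) (convex_Ioi 0) |>.add_const δ).mul_comp_inv

/-- `φ̂` is concave on `(0, ∞)`, and strictly concave if there are two positive-weight
indices with distinct rewards. -/
theorem phiHat_concaveOn_and_strictConcaveOn
    (N : ℕ) (hN : 0 < N) (r w : Fin N → ℝ)
    (hr : ∀ i, r i ∈ Set.Icc (0 : ℝ) 1) (hw : ∀ i, 0 ≤ w i)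
    (δ : ℝ) (hδ : 0 < δ) (hSwpos : 0 < Sw N w) :
    ConcaveOn ℝ (Set.Ioi (0 : ℝ)) (phiHat N r w δ) ∧
      ((∃ i j : Fin N, 0 < w i ∧ 0 < w j ∧ r i ≠ r j) →
        StrictConcaveOn ℝ (Set.Ioi (0 : ℝ)) (phiHat N r w δ)) :=
  phiHat_concaveOn_and_strictConcaveOn_general N r w hw δ
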